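/- Let X be a Hausdorff paracompact space admitting a fixed-point free continuous involution τ, and let q : X → X/τ be the quotient double covering. Then the ℤ/2-index of (X,τ) equals secat(q) − 1. -/

import Mathlib

open Metric Set

/-- A continuous local section of `p` over `U`. -/
def IsLocalSection {E B : Type*} [TopologicalSpace E] [TopologicalSpace B]
    (p : E → B) (U : Set B) : Prop :=
  ∃ s : U → E, Continuous s ∧ ∀ x : U, p (s x) = (x : B)

/-- The sectional category of a map `p : E → B`: the least number of open sets covering `B`,
over each of which `p` admits a continuous local section; `⊤` if no finite cover exists. -/
noncomputable def secat {E B : Type*} [TopologicalSpace E] [TopologicalSpace B]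
    (p : E → B) : ℕ∞ :=
  sInf {n : ℕ∞ | ∃ k : ℕ, n = (k : ℕ∞) ∧ ∃ U : Fin k → Set B,
    (∀ i, IsOpen (U i)) ∧ (⋃ i, U i) = Set.univ ∧ ∀ i, IsLocalSection p (U i)}

/-- A subset is contractible within the ambient space if its inclusion is nullhomotopic. -/
def ContractibleIn {X : Type*} [TopologicalSpace X] (U : Set X) : Prop :=
  ContinuousMap.Nullhomotopic (⟨(Subtype.val : U → X), continuous_subtype_val⟩ : C(U, X))

/-- Lusternik–Schnirelmann category: least number of open sets covering `X`, each
contractible within `X`. -/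
noncomputable def LScat (X : Type*) [TopologicalSpace X] : ℕ∞ :=
  sInf {n : ℕ∞ | ∃ k : ℕ, n = (k : ℕ∞) ∧ ∃ U : Fin k → Set X,
    (∀ i, IsOpen (U i)) ∧ (⋃ i, U i) = Set.univ ∧ ∀ i, ContractibleIn (U i)}

/-- Hurewicz fibration: the homotopy lifting property with respect to all spaces. -/
def IsHurewiczFibration {E B : Type*} [TopologicalSpace E] [TopologicalSpace B]
    (p : E → B) : Prop :=
  ∀ (Z : Type*) [TopologicalSpace Z] (H : Z × unitInterval → B) (h : Z → E),
    Continuous H → Continuous h → (∀ z, p (h z) = H (z, 0)) →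
    ∃ G : Z × unitInterval → E, Continuous G ∧ (∀ z, G (z, 0) = h z) ∧ ∀ w, p (G w) = H w

/-- The orbit relation of the action generated by a map `τ`. -/
def orbitRelOf {X : Type*} (τ : X → X) : X → X → Prop := fun x y => y = τ x

/-- Quotient of `X` by the (involutive) map `τ`, with the quotient topology. -/
abbrev InvolQuot {X : Type*} [TopologicalSpace X] (τ : X → X) : Type _ := Quot (orbitRelOf τ)

/-- The quotient map `X → X/τ`. -/
def involQuotMk {X : Type*} [TopologicalSpace X] (τ : X → X) : X → InvolQuot τ :=
  Quot.mk (orbitRelOf τ)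

/-- The ordered configuration space `F(Y,2)` of two distinct points of `Y`. -/
abbrev Conf2 (Y : Type*) [TopologicalSpace Y] : Type _ := {p : Y × Y // p.1 ≠ p.2}

/-- The swap involution `τ₂` on `F(Y,2)`. -/
def confSwap {Y : Type*} [TopologicalSpace Y] : Conf2 Y → Conf2 Y :=
  fun p => ⟨(p.1.2, p.1.1), Ne.symm p.2⟩

/-- The unordered configuration space `D(Y,2) = F(Y,2)/τ₂`. -/
abbrev UConf2 (Y : Type*) [TopologicalSpace Y] : Type _ := InvolQuot (confSwap (Y := Y))

/-- The quotient double covering `q^Y : F(Y,2) → D(Y,2)`. -/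
def confQuotMk (Y : Type*) [TopologicalSpace Y] : Conf2 Y → UConf2 Y :=
  involQuotMk confSwap

/-- The Borsuk–Ulam property for the triple `((X,τ);Y)`. -/
def BorsukUlamProperty (X : Type*) [TopologicalSpace X] (τ : X → X)
    (Y : Type*) [TopologicalSpace Y] : Prop :=
  ∀ f : X → Y, Continuous f → ∃ x : X, f (τ x) = f x

/-- The `m`-sphere as the unit sphere of `ℝ^{m+1}`. -/
abbrev Sph (m : ℕ) : Type := Metric.sphere (0 : EuclideanSpace ℝ (Fin (m + 1))) 1

/-- The antipodal involution on the sphere. -/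
noncomputable def antipodal (m : ℕ) : Sph m → Sph m := fun x => -x

/-- The smallest dimension of a Euclidean space into which `Y` embeds. -/
noncomputable def embDim (Y : Type*) [TopologicalSpace Y] : ℕ∞ :=
  sInf {n : ℕ∞ | ∃ k : ℕ, n = (k : ℕ∞) ∧
    ∃ e : Y → EuclideanSpace ℝ (Fin k), Topology.IsEmbedding e}

/-- The `ℤ/2`-index of `(X,τ)`: the least `n` such that there is a continuous map
`X → Sⁿ` which is equivariant for `τ` and the antipodal involution. -/
noncomputable def z2Index {X : Type*} [TopologicalSpace X] (τ : X → X) : ℕ∞ :=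
  sInf {n : ℕ∞ | ∃ k : ℕ, n = (k : ℕ∞) ∧
    ∃ g : X → Sph k, Continuous g ∧ ∀ x, g (τ x) = antipodal k (g x)}

section CW

/-- A (classical) CW-complex structure on a Hausdorff space `X`: a family of cells
with characteristic maps from closed disks, the images of the open disks partitioning `X`,
each attaching map sending the boundary sphere into cells of lower dimension, together with
closure finiteness (C) and the weak topology (W). -/
structure CWStructure (X : Type u) [TopologicalSpace X] : Type (u + 1) where
  /-- index type of the `n`-cells -/
  cell : ℕ → Type u
  /-- characteristic map of each `n`-cell -/
  map : (n : ℕ) → cell n → EuclideanSpace ℝ (Fin n) → X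
  continuousOn : ∀ n i, ContinuousOn (map n i) (closedBall 0 1)
  injOn : ∀ n i, Set.InjOn (map n i) (ball 0 1)
  partition : ∀ x : X, ∃! p : Σ n, cell n, x ∈ map p.1 p.2 '' ball 0 1
  mapsTo_boundary : ∀ n i, Set.MapsTo (map n i) (sphere 0 1)
    (⋃ (m : ℕ) (_ : m < n) (j : cell m), map m j '' closedBall 0 1)
  closureFinite : ∀ n i, {p : Σ m, cell m |
    (map p.1 p.2 '' ball 0 1 ∩ map n i '' closedBall 0 1).Nonempty}.Finite
  weakTopology : ∀ A : Set X,
    (∀ n i, IsClosed (A ∩ map n i '' closedBall 0 1)) → IsClosed A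

namespace CWStructure

variable {X : Type u} [TopologicalSpace X] (S : CWStructure X)

/-- The `n`-skeleton of a CW structure. -/
def skeleton (n : ℕ) : Set X :=
  ⋃ (m : ℕ) (_ : m ≤ n) (j : S.cell m), S.map m j '' closedBall 0 1

/-- The CW structure has dimension at most `d`. -/
def DimLE (d : ℕ) : Prop := ∀ n, d < n → IsEmpty (S.cell n)

/-- The CW structure has dimension exactly `d`. -/
def DimEq (d : ℕ) : Prop := S.DimLE d ∧ Nonempty (S.cell d)

/-- A self-map is cellular if it maps each skeleton into itself. -/
def Cellular (f : X → X) : Prop := ∀ n, Set.MapsTo f (S.skeleton n) (S.skeleton n)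

end CWStructure

/-- The homotopical dimension of `X` is at most `d`: `X` is homotopy equivalent to a
CW complex of dimension at most `d`. -/
def HDimLE (X : Type u) [TopologicalSpace X] (d : ℕ) : Prop :=
  ∃ (Z : Type u) (_ : TopologicalSpace Z) (S : CWStructure Z),
    S.DimLE d ∧ Nonempty (ContinuousMap.HomotopyEquiv Z X)

end CW

/-!
An equivariant map `g : X → Sᵐ` yields the `m + 1` open sets `{x | 0 < gᵢ x}`, each disjoint
from its image under `τ`; `q` is injective on them, so their images are `m + 1` open sets of
`X/τ` over which `q` has sections. Conversely, a section of `q` over `Uᵢ` singles out one of the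
two sheets `Aᵢ` of `q⁻¹ Uᵢ`. For a `τ`-invariant partition of unity `μᵢ` subordinate to the
`q⁻¹ Uᵢ`, the functions equal to `μᵢ` on `Aᵢ` and to `-μᵢ` off `Aᵢ` are odd and never vanish
simultaneously, so they normalize to an equivariant map `X → Sᵐ`. Hence the index is `m` exactly
when `secat q` is `m + 1`; for `X = ∅` both sides are `0`, since `0 - 1 = 0` in `ℕ∞`.
-/

def HasLocalSectionCover {E B : Type*} [TopologicalSpace E] [TopologicalSpace B]
    (p : E → B) (k : ℕ) : Prop :=
  ∃ U : Fin k → Set B, (∀ i, IsOpen (U i)) ∧ (⋃ i, U i) = Set.univ ∧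
    ∀ i, IsLocalSection p (U i)

def HasEquivariantSphereMap {X : Type*} [TopologicalSpace X] (τ : X → X) (k : ℕ) : Prop :=
  ∃ g : X → Sph k, Continuous g ∧ ∀ x, g (τ x) = antipodal k (g x)

theorem ENat.sInf_setOf_natCast_eq_sub_one {P Q : ℕ → Prop} (hPQ : ∀ k, Q (k + 1) ↔ P k)
    (h0 : Q 0 → P 0) :
    sInf {n : ℕ∞ | ∃ k : ℕ, n = k ∧ P k} = sInf {n : ℕ∞ | ∃ k : ℕ, n = k ∧ Q k} - 1 := by
  set SP := {n : ℕ∞ | ∃ k : ℕ, n = k ∧ P k}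
  set SQ := {n : ℕ∞ | ∃ k : ℕ, n = k ∧ Q k}
  refine le_antisymm ?_ (le_sInf ?_)
  · rcases SQ.eq_empty_or_nonempty with hQ | hQ
    · simp [hQ]
    obtain ⟨k, hk, hQk⟩ := csInf_mem hQ
    rw [hk]
    cases k with
    | zero => exact sInf_le (show (0 : ℕ∞) ∈ SP from ⟨0, rfl, h0 hQk⟩)
    | succ j => exact ENat.le_sub_one_of_lt <| (sInf_le (show (j : ℕ∞) ∈ SP from
        ⟨j, rfl, (hPQ j).mp hQk⟩)).trans_lt (by exact_mod_cast j.lt_succ_self)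
  · rintro _ ⟨j, rfl, hPj⟩
    rw [tsub_le_iff_right]
    exact sInf_le (show (j : ℕ∞) + 1 ∈ SQ from ⟨j + 1, by push_cast; rfl, (hPQ j).mpr hPj⟩)

theorem IsLocalSection.image_of_injOn {E B : Type*} [TopologicalSpace E] [TopologicalSpace B]
    {p : E → B} (hp : Continuous p) (hpo : IsOpenMap p) {V : Set E} (hV : IsOpen V)
    (hinj : InjOn p V) : IsLocalSection p (p '' V) := by
  let e := (Topology.IsOpenEmbedding.of_continuous_injective_isOpenMap
    (hp.comp continuous_subtype_val) hinj.injective (hpo.domRestrict hV)).isEmbedding.toHomeomorph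
  refine ⟨fun b => (e.symm ⟨b, by rw [range_comp, Subtype.range_coe]; exact b.2⟩ : V), ?_,
    fun b => ?_⟩
  · exact continuous_subtype_val.comp
      (e.symm.continuous.comp (continuous_subtype_val.subtype_mk _))
  · exact congrArg Subtype.val (e.apply_symm_apply _)

section InvolQuot

variable {X : Type*} [TopologicalSpace X] {τ : X → X}

theorem involQuotMk_invol_apply (x : X) : involQuotMk τ (τ x) = involQuotMk τ x :=
  (Quot.sound (show orbitRelOf τ x (τ x) from rfl)).symm

theorem continuous_involQuotMk : Continuous (involQuotMk τ) := continuous_quot_mk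

theorem involQuotMk_eq_iff (hτ : Function.Involutive τ) {x y : X} :
    involQuotMk τ x = involQuotMk τ y ↔ y = x ∨ y = τ x := by
  have hR : Equivalence fun x y : X => y = x ∨ y = τ x :=
    ⟨fun _ => .inl rfl, by rintro x y (rfl | rfl) <;> simp [hτ x], by
      rintro x y z (rfl | rfl) (rfl | rfl) <;> simp [hτ x]⟩
  refine ⟨fun h => hR.eqvGen_iff.mp ((Quot.eqvGen_exact h).mono (fun _ _ => .inr) _ _), ?_⟩
  rintro (rfl | rfl)
  exacts [rfl, (involQuotMk_invol_apply x).symm]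

theorem preimage_image_involQuotMk (hτ : Function.Involutive τ) (V : Set X) :
    involQuotMk τ ⁻¹' (involQuotMk τ '' V) = V ∪ τ ⁻¹' V := by
  ext x
  simp only [mem_preimage, mem_image, mem_union, involQuotMk_eq_iff hτ]
  constructor
  · rintro ⟨y, hy, rfl | rfl⟩
    exacts [.inl hy, .inr (by rwa [hτ y])]
  · rintro (hx | hx)
    exacts [⟨x, hx, .inl rfl⟩, ⟨τ x, hx, .inr (hτ x).symm⟩]

theorem isOpenMap_involQuotMk (hτc : Continuous τ) (hτ : Function.Involutive τ) :
    IsOpenMap (involQuotMk τ) := fun V hV => by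
  rw [← isQuotientMap_quot_mk.isOpen_preimage]
  exact (preimage_image_involQuotMk hτ V ▸ hV.union (hV.preimage hτc) :)

theorem hasLocalSectionCover_succ_of_hasEquivariantSphereMap (hτc : Continuous τ)
    (hτ : Function.Involutive τ) {m : ℕ} (hg : HasEquivariantSphereMap τ m) :
    HasLocalSectionCover (involQuotMk τ) (m + 1) := by
  obtain ⟨g, hgc, hge⟩ := hg
  have hodd : ∀ x i, (g (τ x)).1 i = -(g x).1 i := fun x i => by
    simp [hge, antipodal]
  let P (i : Fin (m + 1)) : Set X := {x | 0 < (g x).1 i}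
  have hP : ∀ i, IsOpen (P i) := fun i => isOpen_lt continuous_const (by fun_prop)
  refine ⟨fun i => involQuotMk τ '' P i, fun i => isOpenMap_involQuotMk hτc hτ _ (hP i), ?_,
    fun i => .image_of_injOn continuous_involQuotMk (isOpenMap_involQuotMk hτc hτ) (hP i) ?_⟩
  · refine eq_univ_of_forall (Quot.ind fun x => ?_)
    obtain ⟨i, hi⟩ : ∃ i, (g x).1 i ≠ 0 := by
      by_contra! h
      exact ne_zero_of_mem_unit_sphere (g x) (PiLp.ext h)
    refine mem_iUnion.mpr ⟨i, ?_⟩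
    rcases hi.lt_or_gt with hneg | hpos
    · exact ⟨τ x, show 0 < (g (τ x)).1 i by rw [hodd]; linarith, involQuotMk_invol_apply x⟩
    · exact ⟨x, hpos, rfl⟩
  · intro x hx y hy hxy
    rcases (involQuotMk_eq_iff hτ).mp hxy with rfl | rfl
    · rfl
    · have hx : 0 < (g x).1 i := hx
      have hy : 0 < (g (τ x)).1 i := hy
      rw [hodd] at hy
      linarith

theorem hasEquivariantSphereMap_of_odd {m : ℕ} (h : X → EuclideanSpace ℝ (Fin (m + 1)))
    (hc : Continuous h) (hodd : ∀ x, h (τ x) = -h x) (hne : ∀ x, h x ≠ 0) :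
    HasEquivariantSphereMap τ m := by
  refine ⟨fun x => ⟨‖h x‖⁻¹ • h x, ?_⟩, ?_, fun x => Subtype.ext ?_⟩
  · simp [norm_smul, hne x]
  · exact ((hc.norm.inv₀ fun x => norm_ne_zero_iff.mpr (hne x)).smul hc).subtype_mk _
  · simp [antipodal, hodd]

theorem exists_sheet_of_isLocalSection [T2Space X] (hτc : Continuous τ)
    (hτ : Function.Involutive τ) (hfree : ∀ x, τ x ≠ x) {U : Set (InvolQuot τ)} (hU : IsOpen U)
    (hs : IsLocalSection (involQuotMk τ) U) :
    ∃ A : Set X, IsOpen A ∧ (∀ x ∈ A, τ x ∉ A) ∧ ∀ x, involQuotMk τ x ∈ U → x ∈ A ∨ τ x ∈ A := by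
  obtain ⟨s, hsc, hsq⟩ := hs
  -- `A` is the image of `s`; Hausdorffness makes it closed in `q⁻¹ U`, and freeness makes its
  -- complement there the other sheet `τ '' A`, closed as well.
  let F : involQuotMk τ ⁻¹' U → X := fun w => s ⟨involQuotMk τ w, w.2⟩
  have hF : Continuous F :=
    hsc.comp ((continuous_involQuotMk.comp continuous_subtype_val).subtype_mk _)
  have hFq : ∀ w, F w = w ∨ F w = τ w := fun w => (involQuotMk_eq_iff hτ).mp (hsq ⟨_, w.2⟩).symm
  have hFτ : ∀ w v : involQuotMk τ ⁻¹' U, (v : X) = τ w → F v = F w := fun w v hv =>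
    congrArg s (Subtype.ext (by simp [hv, involQuotMk_invol_apply]))
  refine ⟨Subtype.val '' {w | F w = w},
    (hU.preimage continuous_involQuotMk).isOpenMap_subtype_val _ ?_, ?_, ?_⟩
  · have : {w | F w = w} = {w | F w = τ w}ᶜ := by
      ext w
      rcases hFq w with h | h <;> simp [h, hfree w, (hfree w).symm]
    exact this ▸ (isClosed_eq hF (hτc.comp continuous_subtype_val)).isOpen_compl
  · rintro _ ⟨w, hw, rfl⟩ ⟨v, hv, hvw⟩
    exact hfree w (hvw.symm.trans (hv.symm.trans ((hFτ w v hvw).trans hw)))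
  · intro x hx
    rcases hFq ⟨x, hx⟩ with h | h
    · exact .inl ⟨⟨x, hx⟩, h, rfl⟩
    · have hτx : involQuotMk τ (τ x) ∈ U := by rwa [involQuotMk_invol_apply]
      exact .inr ⟨⟨τ x, hτx⟩, (hFτ ⟨x, hx⟩ ⟨τ x, hτx⟩ rfl).trans h, rfl⟩

theorem exists_odd_of_sheet (hτc : Continuous τ) {A : Set X} (hA : IsOpen A)
    (hAτ : ∀ x ∈ A, τ x ∉ A) {μ : X → ℝ} (hμ : Continuous μ) (hμτ : ∀ x, μ (τ x) = μ x)
    (hμA : ∀ x, μ x ≠ 0 → x ∈ A ∨ τ x ∈ A) :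
    ∃ h : X → ℝ, Continuous h ∧ (∀ x, h (τ x) = -h x) ∧ ∀ x, |h x| = |μ x| := by
  classical
  -- `μ` and `-μ` need only agree on `frontier A`, and `μ` vanishes there: a frontier point lies
  -- neither in the open set `A` nor in the open set `τ⁻¹ A`, which is disjoint from `A`.
  refine ⟨fun x => if x ∈ A then μ x else -μ x, hμ.if (fun a ha => ?_) hμ.neg, fun x => ?_,
    fun x => by dsimp only; split_ifs <;> simp⟩
  · rw [self_eq_neg]
    by_contra hne
    rw [ofPred_mem_eq, hA.frontier_eq] at ha
    rcases hμA a hne with haA | haA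
    · exact ha.2 haA
    · obtain ⟨y, hyτ, hy⟩ := mem_closure_iff.mp ha.1 _ (hA.preimage hτc) haA
      exact hAτ y hy hyτ
  · by_cases hx : x ∈ A
    · simp [hx, hAτ x hx, hμτ]
    by_cases hτx : τ x ∈ A
    · simp [hx, hτx, hμτ]
    · have : μ x = 0 := by_contra fun hne => (hμA x hne).elim hx hτx
      simp [hx, hτx, hμτ, this]

theorem exists_invariant_subordinate [T2Space X] [ParacompactSpace X] (hτc : Continuous τ)
    (hτ : Function.Involutive τ) {ι : Type*} (W : ι → Set X) (hWo : ∀ i, IsOpen (W i))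
    (hWτ : ∀ i x, τ x ∈ W i ↔ x ∈ W i) (hWc : (⋃ i, W i) = univ) :
    ∃ μ : ι → X → ℝ, (∀ i, Continuous (μ i)) ∧ (∀ i x, μ i (τ x) = μ i x) ∧
      (∀ i x, μ i x ≠ 0 → x ∈ W i) ∧ ∀ x, ∃ i, μ i x ≠ 0 := by
  obtain ⟨f, hf⟩ := PartitionOfUnity.exists_isSubordinate isClosed_univ W hWo hWc.ge
  have hfW : ∀ i x, f i x ≠ 0 → x ∈ W i := fun i x hx => hf i (subset_tsupport _ hx)
  refine ⟨fun i x => f i x + f i (τ x), fun i => by fun_prop, fun i x => by simp [hτ x, add_comm],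
    fun i x hx => ?_, fun x => ?_⟩
  · by_cases h : f i x = 0
    · exact (hWτ i x).mp (hfW i _ (by simpa [h] using hx))
    · exact hfW i x h
  · obtain ⟨i, hi⟩ := f.exists_pos (mem_univ x)
    exact ⟨i, (add_pos_of_pos_of_nonneg hi (f.nonneg i _)).ne'⟩

theorem hasEquivariantSphereMap_of_hasLocalSectionCover_succ [T2Space X] [ParacompactSpace X]
    (hτc : Continuous τ) (hτ : Function.Involutive τ) (hfree : ∀ x, τ x ≠ x) {m : ℕ}
    (hU : HasLocalSectionCover (involQuotMk τ) (m + 1)) : HasEquivariantSphereMap τ m := by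
  obtain ⟨U, hUo, hUc, hUs⟩ := hU
  obtain ⟨μ, hμc, hμτ, hμU, hμne⟩ := exists_invariant_subordinate hτc hτ
    (fun i => involQuotMk τ ⁻¹' U i) (fun i => (hUo i).preimage continuous_involQuotMk)
    (fun i x => by simp [involQuotMk_invol_apply]) (by rw [← preimage_iUnion, hUc, preimage_univ])
  have hodd : ∀ i, ∃ h : X → ℝ, Continuous h ∧ (∀ x, h (τ x) = -h x) ∧ ∀ x, |h x| = |μ i x| := by
    intro i
    obtain ⟨A, hA, hAτ, hAU⟩ := exists_sheet_of_isLocalSection hτc hτ hfree (hUo i) (hUs i)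
    exact exists_odd_of_sheet hτc hA hAτ (hμc i) (hμτ i) fun x hx => hAU x (hμU i x hx)
  choose h hhc hhodd hhμ using hodd
  refine hasEquivariantSphereMap_of_odd (fun x => WithLp.toLp 2 fun i => h i x) (by fun_prop)
    (fun x => by ext i; simp [hhodd]) fun x hx => ?_
  obtain ⟨i, hi⟩ := hμne x
  have : h i x = 0 := congrArg (fun v => v i) hx
  exact hi (abs_eq_zero.mp ((hhμ i x).symm.trans (by simp [this])))

theorem hasEquivariantSphereMap_zero_of_hasLocalSectionCover_zero
    (hU : HasLocalSectionCover (involQuotMk τ) 0) : HasEquivariantSphereMap τ 0 := by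
  obtain ⟨U, -, hUc, -⟩ := hU
  have : IsEmpty X := ⟨fun x => by simpa using hUc.ge (mem_univ (involQuotMk τ x))⟩
  exact ⟨isEmptyElim, continuous_of_discreteTopology, isEmptyElim⟩

end InvolQuot

/-- for a Hausdorff paracompact space `X` with free involution `τ`, the
`ℤ/2`-index of `(X,τ)` equals `secat (q : X → X/τ) − 1`. -/
theorem stmt_19 {X : Type*} [TopologicalSpace X] [T2Space X] [ParacompactSpace X]
    (τ : X → X) (hτc : Continuous τ) (hτinv : Function.Involutive τ)
    (hτfree : ∀ x, τ x ≠ x) :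
    z2Index τ = secat (involQuotMk τ) - 1 :=
  ENat.sInf_setOf_natCast_eq_sub_one
    (fun _ => ⟨hasEquivariantSphereMap_of_hasLocalSectionCover_succ hτc hτinv hτfree,
      hasLocalSectionCover_succ_of_hasEquivariantSphereMap hτc hτinv⟩)
    hasEquivariantSphereMap_zero_of_hasLocalSectionCover_zero
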